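/- Let c^{(ℓ)} be the conductance of the first ℓ generations of a Poisson(d) Galton-Watson tree. Then for every t ≥ 0 and ℓ ≥ 1, P(|c^{(ℓ)} − E[c^{(ℓ)}]| ≥ t) ≤ 2·exp(−d·h(t/d)), where h(x) = (1+x)log(1+x) − x. -/

import Mathlib

/-!
Write `Y = c / (1 + c) ∈ [0, 1]`, so that `c^{(ℓ)}` has the law of the compound Poisson sum
`S = ∑_{i < L} Yᵢ`, whose moment generating function is `exp (d (E e^{λY} - 1))`. Convexity of
`exp` on `[0, 1]` gives `E e^{λY} ≤ 1 + p (e^λ - 1)` with `p = E Y`, hence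
`E e^{λS} ≤ exp (ν (e^λ - 1))` with `ν = E S = d p ≤ d`: in the Chernoff sense `S` is dominated by
a `Poisson(ν)` variable. Chernoff's bound at `λ = ± log (1 + t / d)` then bounds each tail by
`exp (-d h(t/d))`; for the lower tail one also needs `e^{-s} - 1 + s ≤ e^s - 1 - s`, i.e.
`s ≤ sinh s`.
-/

open MeasureTheory ProbabilityTheory Real
open scoped ENNReal

theorem hasSum_poisson_mul_pow (d x : ℝ) :
    HasSum (fun k : ℕ => exp (-d) * d ^ k / k.factorial * x ^ k) (exp (d * (x - 1))) := by
  have h := (NormedSpace.expSeries_div_hasSum_exp (d * x)).mul_left (exp (-d))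
  rw [← exp_eq_exp_ℝ, ← exp_add] at h
  have e : (fun k : ℕ => exp (-d) * d ^ k / k.factorial * x ^ k) =
      fun k => exp (-d) * ((d * x) ^ k / k.factorial) := funext fun k => by ring
  rwa [e, show d * (x - 1) = -d + d * x by ring]

theorem Real.exp_neg_sub_one_add_le {s : ℝ} (hs : 0 ≤ s) : exp (-s) - 1 + s ≤ exp s - 1 - s := by
  have := self_le_sinh_iff.2 hs
  rw [sinh_eq] at this
  linarith

theorem bennett_exponent_eq {d t : ℝ} (hd : 0 < d) (ht : 0 ≤ t) :
    -d * ((1 + t / d) * log (1 + t / d) - t / d)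
      = d * (exp (log (1 + t / d)) - 1 - log (1 + t / d)) - log (1 + t / d) * t := by
  rw [exp_log (by positivity)]
  field_simp
  ring

section Chernoff

variable {Ω : Type*} [MeasurableSpace Ω] {μ : Measure Ω} [IsFiniteMeasure μ]
  {X : Ω → ℝ} {ν d s : ℝ}

theorem measureReal_add_le_le_of_mgf_le (hνd : ν ≤ d) (hs : 0 ≤ s)
    (hint : Integrable (fun ω => exp (s * X ω)) μ)
    (hmgf : mgf X μ s ≤ exp (ν * (exp s - 1))) (t : ℝ) :
    μ.real {ω | ν + t ≤ X ω} ≤ exp (d * (exp s - 1 - s) - s * t) :=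
  calc μ.real {ω | ν + t ≤ X ω} ≤ exp (-s * (ν + t)) * mgf X μ s :=
        measure_ge_le_exp_mul_mgf _ hs hint
    _ ≤ exp (-s * (ν + t)) * exp (ν * (exp s - 1)) := by gcongr
    _ = exp (ν * (exp s - 1 - s) - s * t) := by rw [← exp_add]; ring_nf
    _ ≤ exp (d * (exp s - 1 - s) - s * t) := by
        gcongr
        linarith [add_one_le_exp s]

theorem measureReal_le_sub_le_of_mgf_le (hd : 0 ≤ d) (hνd : ν ≤ d) (hs : 0 ≤ s)
    (hint : Integrable (fun ω => exp (-s * X ω)) μ)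
    (hmgf : mgf X μ (-s) ≤ exp (ν * (exp (-s) - 1))) (t : ℝ) :
    μ.real {ω | X ω ≤ ν - t} ≤ exp (d * (exp s - 1 - s) - s * t) :=
  calc μ.real {ω | X ω ≤ ν - t} ≤ exp (- -s * (ν - t)) * mgf X μ (-s) :=
        measure_le_le_exp_mul_mgf _ (neg_nonpos.2 hs) hint
    _ ≤ exp (- -s * (ν - t)) * exp (ν * (exp (-s) - 1)) := by gcongr
    _ = exp (ν * (exp (-s) - 1 + s) - s * t) := by rw [← exp_add]; ring_nf
    _ ≤ exp (d * (exp s - 1 - s) - s * t) := by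
        have h0 : 0 ≤ exp (-s) - 1 + s := by linarith [add_one_le_exp (-s)]
        gcongr exp (?_ - _)
        calc ν * (exp (-s) - 1 + s) ≤ d * (exp (-s) - 1 + s) := by gcongr
          _ ≤ d * (exp s - 1 - s) := by gcongr; exact exp_neg_sub_one_add_le hs

theorem measure_le_abs_sub_le_of_mgf_le (hd : 0 ≤ d) (hνd : ν ≤ d) (hs : 0 ≤ s)
    (hint : ∀ u, Integrable (fun ω => exp (u * X ω)) μ)
    (hmgf : ∀ u, mgf X μ u ≤ exp (ν * (exp u - 1))) (t : ℝ) :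
    μ {ω | t ≤ |X ω - ν|} ≤ ENNReal.ofReal (2 * exp (d * (exp s - 1 - s) - s * t)) := by
  have hcover : {ω | t ≤ |X ω - ν|} ⊆ {ω | ν + t ≤ X ω} ∪ {ω | X ω ≤ ν - t} := by
    intro ω hω
    rcases le_abs'.1 hω.out with h | h
    · exact Or.inr (by simp only [Set.mem_ofPred_eq]; linarith)
    · exact Or.inl (by simp only [Set.mem_ofPred_eq]; linarith)
  rw [← ofReal_measureReal]
  refine ENNReal.ofReal_le_ofReal ?_
  calc μ.real {ω | t ≤ |X ω - ν|}
      ≤ μ.real {ω | ν + t ≤ X ω} + μ.real {ω | X ω ≤ ν - t} :=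
        (measureReal_mono hcover).trans (measureReal_union_le _ _)
    _ ≤ _ := by
        rw [two_mul]
        exact add_le_add (measureReal_add_le_le_of_mgf_le hνd hs (hint s) (hmgf s) t)
          (measureReal_le_sub_le_of_mgf_le hd hνd hs (hint (-s)) (hmgf (-s)) t)

end Chernoff

theorem mgf_le_one_add_integral_mul {Ω : Type*} [MeasurableSpace Ω] {μ : Measure Ω}
    [IsProbabilityMeasure μ] {Y : Ω → ℝ} (hY : AEMeasurable Y μ)
    (h01 : ∀ᵐ ω ∂μ, Y ω ∈ Set.Icc 0 1) (t : ℝ) :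
    mgf Y μ t ≤ 1 + μ[Y] * (exp t - 1) := by
  have hYint : Integrable Y μ := .of_mem_Icc 0 1 hY h01
  calc mgf Y μ t ≤ ∫ ω, (1 + Y ω * (exp t - 1)) ∂μ := by
        refine integral_mono_ae (integrable_exp_mul_of_mem_Icc hY h01)
          ((integrable_const 1).add (hYint.mul_const _)) ?_
        filter_upwards [h01] with ω ⟨h0, h1⟩
        have := convexOn_exp.2 (Set.mem_univ 0) (Set.mem_univ t) (sub_nonneg.2 h1) h0 (by ring)
        simp only [smul_eq_mul, mul_zero, zero_add, exp_zero] at this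
        rw [mul_comm t]
        linarith
    _ = 1 + μ[Y] * (exp t - 1) := by
        rw [integral_add (integrable_const 1) (hYint.mul_const _), integral_mul_const]
        simp

section RandomSum

variable {Ω : Type*} [MeasurableSpace Ω] {μ : Measure Ω}

theorem lintegral_comp_eq_tsum_setLIntegral {L : Ω → ℕ} (hL : Measurable L)
    (G : ℕ → Ω → ℝ≥0∞) :
    ∫⁻ ω, G (L ω) ω ∂μ = ∑' k, ∫⁻ ω in {ω | L ω = k}, G k ω ∂μ := by
  have hmeas (k : ℕ) : MeasurableSet {ω | L ω = k} := hL (measurableSet_singleton k)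
  have hcover : (⋃ k, {ω | L ω = k}) = Set.univ := Set.iUnion_eq_univ_iff.2 fun ω => ⟨L ω, rfl⟩
  rw [← setLIntegral_univ, ← hcover, lintegral_iUnion hmeas]
  · exact tsum_congr fun k => setLIntegral_congr_fun (hmeas k) fun ω hω => by rw [hω.out]
  · exact fun i j hij => Set.disjoint_left.2 fun ω hi hj => hij (hi.symm.trans hj)

theorem setLIntegral_prod_range_eq {L : Ω → ℕ} {X : ℕ → Ω → ℝ}
    (hindep : iIndepFun (fun o : Option ℕ => Option.elim o (fun ω => (L ω : ℝ)) X) μ)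
    (hL : Measurable L) (hX : ∀ i, Measurable (X i)) {F : ℝ → ℝ≥0∞} (hF : Measurable F)
    (k : ℕ) :
    ∫⁻ ω in {ω | L ω = k}, ∏ i ∈ Finset.range k, F (X i ω) ∂μ
      = μ {ω | L ω = k} * ∏ i ∈ Finset.range k, ∫⁻ ω, F (X i ω) ∂μ := by
  classical
  have hmeas : MeasurableSet {ω | L ω = k} := hL (measurableSet_singleton k)
  set W : Option ℕ → Ω → ℝ≥0∞ := fun o =>
    Option.elim o (({(k : ℝ)} : Set ℝ).indicator 1) (fun _ => F) ∘
      Option.elim o (fun ω => (L ω : ℝ)) X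
  have hW : iIndepFun W μ := hindep.comp _ <| by
    rintro (_ | i)
    exacts [measurable_one.indicator (measurableSet_singleton _), hF]
  have hWm : ∀ o, Measurable (W o) := by
    rintro (_ | i)
    exacts [(measurable_one.indicator (measurableSet_singleton _)).comp
      (measurable_from_nat.comp hL), hF.comp (hX i)]
  have hWnone : W none = {ω | L ω = k}.indicator 1 := by
    ext ω
    simp only [W, Option.elim, Function.comp, Set.indicator_apply, Set.mem_singleton_iff,
      Set.mem_ofPred_eq, Nat.cast_inj, Pi.one_apply]
  have hprod := lintegral_prod_eq_prod_lintegral_of_indepFun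
    (insert none ((Finset.range k).map Function.Embedding.some)) W hW hWm
  simp only [Finset.prod_insert (show none ∉ (Finset.range k).map Function.Embedding.some by simp),
    Finset.prod_map, hWnone, lintegral_indicator_one hmeas] at hprod
  rw [← lintegral_indicator hmeas]
  convert hprod using 3 with ω
  · by_cases h : L ω = k <;> simp [h, W]
  · rfl

theorem ProbabilityTheory.iIndepFun.option_elim_comp {Y : Ω → ℝ} {X : ℕ → Ω → ℝ}
    (h : iIndepFun (fun o : Option ℕ => Option.elim o Y X) μ) {g : ℝ → ℝ} (hg : Measurable g) :
    iIndepFun (fun o : Option ℕ => Option.elim o Y fun i => g ∘ X i) μ := by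
  convert h.comp (fun o => Option.elim o id fun _ => g)
    (by rintro (_ | i); exacts [measurable_id, hg]) with o
  cases o <;> rfl

def randomSum (L : Ω → ℕ) (X : ℕ → Ω → ℝ) (ω : Ω) : ℝ := ∑ i ∈ Finset.range (L ω), X i ω

theorem measurable_randomSum {L : Ω → ℕ} {X : ℕ → Ω → ℝ} (hL : Measurable L)
    (hX : ∀ i, Measurable (X i)) : Measurable (randomSum L X) := by
  have : Measurable fun p : ℕ × Ω => ∑ i ∈ Finset.range p.1, X i p.2 :=
    measurable_from_prod_countable_right fun k =>
      Finset.measurable_sum (Finset.range k) fun i _ => hX i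
  exact this.comp (hL.prodMk measurable_id)

variable {L : Ω → ℕ} {X : ℕ → Ω → ℝ} {Z : Ω → ℝ} {d t : ℝ}
  (hindep : iIndepFun (fun o : Option ℕ => Option.elim o (fun ω => (L ω : ℝ)) X) μ)
  (hL : Measurable L) (hd : 0 ≤ d)
  (hLpois : ∀ k : ℕ, μ {ω | L ω = k} = ENNReal.ofReal (exp (-d) * d ^ k / k.factorial))
  (hX : ∀ i, Measurable (X i)) (hcopies : ∀ i, IdentDistrib (X i) Z μ μ)
include hindep hL hd hLpois hX hcopies

theorem lintegral_exp_mul_randomSum (hZ : Integrable (fun ω => exp (t * Z ω)) μ) :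
    ∫⁻ ω, ENNReal.ofReal (exp (t * randomSum L X ω)) ∂μ
      = ENNReal.ofReal (exp (d * (mgf Z μ t - 1))) := by
  set F : ℝ → ℝ≥0∞ := fun y => ENNReal.ofReal (exp (t * y))
  have hF : Measurable F := ((measurable_const_mul t).exp).ennreal_ofReal
  have hFX (i : ℕ) : ∫⁻ ω, F (X i ω) ∂μ = ENNReal.ofReal (mgf Z μ t) :=
    ((hcopies i).comp hF).lintegral_eq.trans
      (ofReal_integral_eq_lintegral_ofReal hZ (ae_of_all _ fun ω => (exp_pos _).le)).symm
  have hsplit (ω : Ω) : ENNReal.ofReal (exp (t * randomSum L X ω))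
      = ∏ i ∈ Finset.range (L ω), F (X i ω) := by
    rw [randomSum, Finset.mul_sum, exp_sum,
      ENNReal.ofReal_prod_of_nonneg fun i _ => (exp_pos _).le]
  have hterm (k : ℕ) : ∫⁻ ω in {ω | L ω = k}, ∏ i ∈ Finset.range k, F (X i ω) ∂μ
      = ENNReal.ofReal (exp (-d) * d ^ k / k.factorial * mgf Z μ t ^ k) := by
    rw [setLIntegral_prod_range_eq hindep hL hX hF, hLpois,
      Finset.prod_congr rfl fun i _ => hFX i, Finset.prod_const, Finset.card_range,
      ← ENNReal.ofReal_pow mgf_nonneg, ← ENNReal.ofReal_mul (by positivity)]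
  simp_rw [hsplit]
  rw [lintegral_comp_eq_tsum_setLIntegral hL (fun k ω => ∏ i ∈ Finset.range k, F (X i ω))]
  simp_rw [hterm]
  rw [← ENNReal.ofReal_tsum_of_nonneg
      (fun k => mul_nonneg (by positivity) (pow_nonneg mgf_nonneg k))
      (hasSum_poisson_mul_pow d _).summable, (hasSum_poisson_mul_pow d _).tsum_eq]

theorem integrable_exp_mul_randomSum (hZ : Integrable (fun ω => exp (t * Z ω)) μ) :
    Integrable (fun ω => exp (t * randomSum L X ω)) μ := by
  refine ⟨((measurable_randomSum hL hX).const_mul t).exp.aestronglyMeasurable, ?_⟩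
  rw [hasFiniteIntegral_iff_ofReal (ae_of_all _ fun ω => (exp_pos _).le),
    lintegral_exp_mul_randomSum hindep hL hd hLpois hX hcopies hZ]
  exact ENNReal.ofReal_lt_top

theorem mgf_randomSum (hZ : Integrable (fun ω => exp (t * Z ω)) μ) :
    mgf (randomSum L X) μ t = exp (d * (mgf Z μ t - 1)) := by
  rw [mgf, integral_eq_lintegral_of_nonneg_ae (ae_of_all _ fun ω => (exp_pos _).le)
    ((measurable_randomSum hL hX).const_mul t).exp.aestronglyMeasurable,
    lintegral_exp_mul_randomSum hindep hL hd hLpois hX hcopies hZ,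
    ENNReal.toReal_ofReal (exp_pos _).le]

theorem integral_randomSum (hZ : ∀ t, Integrable (fun ω => exp (t * Z ω)) μ) :
    μ[randomSum L X] = d * μ[Z] := by
  have := hindep.isProbabilityMeasure
  have hZ' : HasDerivAt (mgf Z μ) μ[Z] 0 := by
    simpa using hasDerivAt_mgf (t := 0) (by simp [integrableExpSet, hZ])
  have hmgf : mgf (randomSum L X) μ = fun t => exp (d * (mgf Z μ t - 1)) :=
    funext fun t => mgf_randomSum hindep hL hd hLpois hX hcopies (hZ t)
  rw [← deriv_mgf_zero (by simp [integrableExpSet,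
    integrable_exp_mul_randomSum hindep hL hd hLpois hX hcopies (hZ _)]), hmgf,
    (((hZ'.sub_const 1).const_mul d).exp).deriv, mgf_zero]
  simp

theorem integral_randomSum_le (hZ01 : ∀ᵐ ω ∂μ, Z ω ∈ Set.Icc 0 1) : μ[randomSum L X] ≤ d := by
  have := hindep.isProbabilityMeasure
  have hZm := (hcopies 0).aemeasurable_snd
  rw [integral_randomSum hindep hL hd hLpois hX hcopies
    fun u => integrable_exp_mul_of_mem_Icc hZm hZ01]
  refine mul_le_of_le_one_right hd ?_
  simpa using integral_mono_ae (Integrable.of_mem_Icc 0 1 hZm hZ01) (integrable_const 1)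
    (hZ01.mono fun ω h => h.2)

theorem mgf_randomSum_le (hZ01 : ∀ᵐ ω ∂μ, Z ω ∈ Set.Icc 0 1) (t : ℝ) :
    mgf (randomSum L X) μ t ≤ exp (μ[randomSum L X] * (exp t - 1)) := by
  have := hindep.isProbabilityMeasure
  have hZm := (hcopies 0).aemeasurable_snd
  have hZ (u : ℝ) := integrable_exp_mul_of_mem_Icc (t := u) hZm hZ01
  rw [mgf_randomSum hindep hL hd hLpois hX hcopies (hZ t),
    integral_randomSum hindep hL hd hLpois hX hcopies hZ, mul_assoc]
  gcongr
  linarith [mgf_le_one_add_integral_mul hZm hZ01 t]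

end RandomSum

theorem truncated_conductance_concentration_general
    {Ω : Type*} [MeasurableSpace Ω] (μ : Measure Ω) [IsProbabilityMeasure μ]
    (d : ℝ) (hd : 1 < d)
    (L : Ω → ℕ) (hL : Measurable L)
    (hLpois : ∀ k : ℕ, μ {ω | L ω = k} =
      ENNReal.ofReal (Real.exp (-d) * d ^ k / (Nat.factorial k : ℝ)))
    (cp : Ω → ℝ) (hcpnn : ∀ ω, 0 ≤ cp ω)
    (ci : ℕ → Ω → ℝ) (hci : ∀ i, Measurable (ci i))
    (hcopies : ∀ i, IdentDistrib (ci i) cp μ μ)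
    (hindep : iIndepFun
      (fun o : Option ℕ => Option.elim o (fun ω => (L ω : ℝ)) ci) μ)
    (cℓ : Ω → ℝ)
    (hlaw : IdentDistrib cℓ
      (fun ω => ∑ i ∈ Finset.range (L ω), ci i ω / (1 + ci i ω)) μ μ) :
    ∀ t : ℝ, 0 ≤ t →
      μ {ω | t ≤ |cℓ ω - ∫ ω', cℓ ω' ∂μ|} ≤
        ENNReal.ofReal (2 * Real.exp (-d * ((1 + t / d) * Real.log (1 + t / d) - t / d))) := by
  intro t ht
  have hd0 : 0 < d := by linarith
  have hg : Measurable fun x : ℝ => x / (1 + x) := by fun_prop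
  have hY (i : ℕ) : Measurable fun ω => ci i ω / (1 + ci i ω) := hg.comp (hci i)
  have hindepY : iIndepFun (fun o : Option ℕ => Option.elim o (fun ω => (L ω : ℝ))
      fun i ω => ci i ω / (1 + ci i ω)) μ := hindep.option_elim_comp hg
  have hcopiesY (i : ℕ) := (hcopies i).comp hg
  have hZ01 : ∀ᵐ ω ∂μ, cp ω / (1 + cp ω) ∈ Set.Icc 0 1 := ae_of_all _ fun ω =>
    ⟨div_nonneg (hcpnn ω) (by linarith [hcpnn ω]),
      div_le_one_of_le₀ (by linarith) (by linarith [hcpnn ω])⟩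
  have hint (u : ℝ) : Integrable (fun ω => exp (u * cℓ ω)) μ :=
    (hlaw.comp (measurable_const_mul u).exp).integrable_iff.2 <|
      integrable_exp_mul_randomSum hindepY hL hd0.le hLpois hY hcopiesY
        (integrable_exp_mul_of_mem_Icc (hcopiesY 0).aemeasurable_snd hZ01)
  have hmgf (u : ℝ) : mgf cℓ μ u ≤ exp (μ[cℓ] * (exp u - 1)) := by
    rw [mgf_congr_identDistrib hlaw, hlaw.integral_eq]
    exact mgf_randomSum_le hindepY hL hd0.le hLpois hY hcopiesY hZ01 u
  have hmean : μ[cℓ] ≤ d := by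
    rw [hlaw.integral_eq]
    exact integral_randomSum_le hindepY hL hd0.le hLpois hY hcopiesY hZ01
  rw [bennett_exponent_eq hd0 ht]
  exact measure_le_abs_sub_le_of_mgf_le hd0.le hmean
    (log_nonneg (le_add_of_nonneg_right (div_nonneg ht hd0.le))) hint hmgf t

/-- Bennett-type concentration for the truncated conductance of a `Poisson(d)`
Galton-Watson tree: if `c^{(ℓ)}` has the law of `∑_{i<L} cᵢ/(1+cᵢ)` where `L ~ Poisson(d)`
is independent of the i.i.d. nonnegative random variables `cᵢ` (copies of the
depth-`(ℓ−1)` truncated conductance), then for every `t ≥ 0`,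
`P(|c^{(ℓ)} − E c^{(ℓ)}| ≥ t) ≤ 2 exp(−d·h(t/d))`, with `h(x) = (1+x)log(1+x) − x`. -/
theorem truncated_conductance_concentration
    {Ω : Type*} [MeasurableSpace Ω] (μ : Measure Ω) [IsProbabilityMeasure μ]
    (d : ℝ) (hd : 1 < d)
    (L : Ω → ℕ) (hL : Measurable L)
    (hLpois : ∀ k : ℕ, μ {ω | L ω = k} =
      ENNReal.ofReal (Real.exp (-d) * d ^ k / (Nat.factorial k : ℝ)))
    (cp : Ω → ℝ) (hcp : Measurable cp) (hcpnn : ∀ ω, 0 ≤ cp ω)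
    (ci : ℕ → Ω → ℝ) (hci : ∀ i, Measurable (ci i)) (hcinn : ∀ i ω, 0 ≤ ci i ω)
    (hcopies : ∀ i, IdentDistrib (ci i) cp μ μ)
    (hindep : iIndepFun
      (fun o : Option ℕ => Option.elim o (fun ω => (L ω : ℝ)) ci) μ)
    (cℓ : Ω → ℝ) (hcℓ : Measurable cℓ)
    (hlaw : IdentDistrib cℓ
      (fun ω => ∑ i ∈ Finset.range (L ω), ci i ω / (1 + ci i ω)) μ μ) :
    ∀ t : ℝ, 0 ≤ t →
      μ {ω | t ≤ |cℓ ω - ∫ ω', cℓ ω' ∂μ|} ≤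
        ENNReal.ofReal (2 * Real.exp (-d * ((1 + t / d) * Real.log (1 + t / d) - t / d))) :=
  truncated_conductance_concentration_general μ d hd L hL hLpois cp hcpnn ci hci hcopies hindep cℓ
    hlaw
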